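/- (Theorem, D_IBSI∘D_IPSI order.) Let ν₁ ≠ 0 and m₁ be real with (m₁−1)ν₁ = −2 (a scale-invariant and magnitude-invariant point). Define the Iso-Perturbation dual ν̃₂ := 4/(m₁−1), and then the Iso-Background dual m̃₂ := −2/ν̃₂ + 1. Then: (i) ν̃₂ = −2ν₁; (ii) (m̃₂−1)ν̃₂ = −2, so (ν̃₂, m̃₂) is again scale-invariant and magnitude-invariant; and (iii) (m̃₂−1)ν₁ = 1, i.e. the point (ν₁, m̃₂) lies exactly on the boundary of the magnitude-invariance region. -/

import Mathlib

/-! On the branch `(m - 1) ν = -2` the IPSI dual `4 / (m - 1)` is `-2 ν`, and the IBSI dual of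
`-2 ν` is `1 / ν + 1`: doubling and flipping the sign of `ν` halves `-2 / ν` into `1 / ν`, which
puts `(ν, m̃₂)` on the boundary `(m - 1) ν = 1`. -/

noncomputable section

/-- The paper's `D_IPSI`, which keeps the friction coefficient `m` and changes `ν`. -/
def ipsiDual (m : ℝ) : ℝ := 4 / (m - 1)

/-- The paper's `D_IBSI`, which keeps the background index `ν` and changes `m`. -/
def ibsiDual (ν : ℝ) : ℝ := -2 / ν + 1

lemma ipsiDual_eq_neg_two_mul {ν m : ℝ} (h : (m - 1) * ν = -2) : ipsiDual m = -2 * ν := by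
  have hm : m - 1 ≠ 0 := left_ne_zero_of_mul (by rw [h]; norm_num)
  rw [ipsiDual, div_eq_iff hm]
  linear_combination 2 * h

lemma ibsiDual_sub_one_mul_self {ν : ℝ} (hν : ν ≠ 0) : (ibsiDual ν - 1) * ν = -2 := by
  rw [ibsiDual, add_sub_cancel_right, div_mul_cancel₀ _ hν]

lemma ibsiDual_neg_two_mul_sub_one_mul {ν : ℝ} (hν : ν ≠ 0) :
    (ibsiDual (-2 * ν) - 1) * ν = 1 := by
  rw [ibsiDual]
  field_simp
  ring

end

theorem duality_IBSI_IPSI_general (ν₁ m₁ : ℝ) (h : (m₁ - 1) * ν₁ = -2)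
    (ν₂ m₂ : ℝ) (hν₂ : ν₂ = 4 / (m₁ - 1)) (hm₂ : m₂ = -2 / ν₂ + 1) :
    ν₂ = -2 * ν₁ ∧ (m₂ - 1) * ν₂ = -2 ∧ (m₂ - 1) * ν₁ = 1 := by
  have hν₁ : ν₁ ≠ 0 := right_ne_zero_of_mul (by rw [h]; norm_num)
  have hν₂' : ν₂ = -2 * ν₁ := hν₂.trans (ipsiDual_eq_neg_two_mul h)
  have hm₂' : m₂ = ibsiDual ν₂ := hm₂
  subst hν₂' hm₂'
  exact ⟨rfl, ibsiDual_sub_one_mul_self (mul_ne_zero (by norm_num) hν₁),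
    ibsiDual_neg_two_mul_sub_one_mul hν₁⟩

/-- D_IBSI ∘ D_IPSI: starting from a scale- and magnitude-invariant point
    (ν₁, m₁) with (m₁−1)ν₁ = −2, the Iso-Perturbation dual ν̃₂ = 4/(m₁−1) followed by
    the Iso-Background dual m̃₂ = −2/ν̃₂ + 1 gives ν̃₂ = −2ν₁, a new scale- and
    magnitude-invariant point (ν̃₂, m̃₂) with (m̃₂−1)ν̃₂ = −2, and (ν₁, m̃₂) lies on the
    boundary of the magnitude-invariance region: (m̃₂−1)ν₁ = 1. -/
theorem duality_IBSI_IPSI (ν₁ m₁ : ℝ) (hν : ν₁ ≠ 0) (h : (m₁ - 1) * ν₁ = -2)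
    (ν₂ m₂ : ℝ) (hν₂ : ν₂ = 4 / (m₁ - 1)) (hm₂ : m₂ = -2 / ν₂ + 1) :
    ν₂ = -2 * ν₁ ∧ (m₂ - 1) * ν₂ = -2 ∧ (m₂ - 1) * ν₁ = 1 :=
  duality_IBSI_IPSI_general ν₁ m₁ h ν₂ m₂ hν₂ hm₂
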